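/- arXiv:2203.08023 — 2 statements merged into one kernel-verified Lean document; each statement's English description precedes it below -/
import Mathlib

section
/- Let σ_AB = Σᵢ σᴬᵢ ⊗ Σₓ βⁱₓ|x⟩⟨x| and τ_BC = Σⱼ Σₓ β̃ʲₓ|x⟩⟨x| ⊗ τᶜⱼ be classical-quantum bipartite states on ℂᵈ⊗ℂᵈ (σᴬᵢ, τᶜⱼ density matrices, βⁱₓ, β̃ʲₓ ≥ 0) whose B-marginals agree: Σᵢ βⁱₓ = Σⱼ β̃ʲₓ =: ρ_{B,x} for all x. Define βⁱʲₓ = βⁱₓβ̃ʲₓ/ρ_{B,x} if ρ_{B,x} ≠ 0 and 0 otherwise. Then ρ_ABC = Σ_{i,j,x} βⁱʲₓ (σᴬᵢ ⊗ |x⟩⟨x| ⊗ τᶜⱼ) is a density matrix on ℂᵈ⊗ℂᵈ⊗ℂᵈ whose AB-marginal is σ_AB and whose BC-marginal is τ_BC. -/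
open Matrix ComplexOrder
open Kronecker

variable {d : ℕ}

/-- The AB-marginal (trace out C) of a tripartite matrix on ℂᵈ⊗ℂᵈ⊗ℂᵈ. -/
noncomputable def trC (ρ : Matrix (Fin d × Fin d × Fin d) (Fin d × Fin d × Fin d) ℂ) :
    Matrix (Fin d × Fin d) (Fin d × Fin d) ℂ :=
  fun p q => ∑ k : Fin d, ρ (p.1, p.2, k) (q.1, q.2, k)

/-- The BC-marginal (trace out A) of a tripartite matrix on ℂᵈ⊗ℂᵈ⊗ℂᵈ. -/
noncomputable def trA (ρ : Matrix (Fin d × Fin d × Fin d) (Fin d × Fin d × Fin d) ℂ) :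
    Matrix (Fin d × Fin d) (Fin d × Fin d) ℂ :=
  fun p q => ∑ k : Fin d, ρ (k, p.1, p.2) (k, q.1, q.2)

lemma psd_sum {n ι : Type*} [Fintype n] (s : Finset ι) (f : ι → Matrix n n ℂ)
    (h : ∀ i ∈ s, (f i).PosSemidef) : (∑ i ∈ s, f i).PosSemidef :=
  Finset.sum_induction f _ (fun _ _ ha hb => ha.add hb) Matrix.PosSemidef.zero h

lemma psd_smul {n : Type*} [Fintype n] {M : Matrix n n ℂ} (hM : M.PosSemidef)
    {c : ℝ} (hc : 0 ≤ c) : ((c : ℂ) • M).PosSemidef := by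
  constructor
  · have := hM.1
    unfold Matrix.IsHermitian at *
    rw [conjTranspose_smul, this]
    congr 1
    simp [Complex.conj_ofReal]
  · intro x
    exact (hM.smul (a := (c : ℂ)) (by exact_mod_cast hc)).2 x

lemma psd_kron {m n : Type*} [Fintype m] [Fintype n] [DecidableEq m] [DecidableEq n]
    {A : Matrix m m ℂ} {B : Matrix n n ℂ} (hA : A.PosSemidef) (hB : B.PosSemidef) :
    (A ⊗ₖ B).PosSemidef := by
  exact hA.kronecker hB

/-- Two classical-quantum states overlapping in a classical subsystem B that are
compatible on B admit an explicit joint tripartite extension. -/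
theorem stmt14 (d : ℕ) (hd : 1 ≤ d) (ιq ιr : Type) [Fintype ιq] [Fintype ιr]
    (σA : ιq → Matrix (Fin d) (Fin d) ℂ) (τC : ιr → Matrix (Fin d) (Fin d) ℂ)
    (hσpsd : ∀ i, (σA i).PosSemidef) (hσtr : ∀ i, (σA i).trace = 1)
    (hτpsd : ∀ j, (τC j).PosSemidef) (hτtr : ∀ j, (τC j).trace = 1)
    (β : ιq → Fin d → ℝ) (βt : ιr → Fin d → ℝ)
    (hβ : ∀ i x, 0 ≤ β i x) (hβt : ∀ j x, 0 ≤ βt j x)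
    (hβsum : ∑ i, ∑ x, β i x = 1)
    (hcompat : ∀ x, ∑ i, β i x = ∑ j, βt j x) :
    -- the explicit joint state
    let ρB : Fin d → ℝ := fun x => ∑ i, β i x
    let βij : ιq → ιr → Fin d → ℝ := fun i j x =>
      if ρB x ≠ 0 then β i x * βt j x / ρB x else 0
    let ρABC : Matrix (Fin d × Fin d × Fin d) (Fin d × Fin d × Fin d) ℂ :=
      fun p q => if p.2.1 = q.2.1 then
        ∑ i, ∑ j, ((βij i j p.2.1 : ℝ) : ℂ) * σA i p.1 q.1 * τC j p.2.2 q.2.2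
      else 0
    let σAB : Matrix (Fin d × Fin d) (Fin d × Fin d) ℂ :=
      fun p q => if p.2 = q.2 then ∑ i, ((β i p.2 : ℝ) : ℂ) * σA i p.1 q.1 else 0
    let τBC : Matrix (Fin d × Fin d) (Fin d × Fin d) ℂ :=
      fun p q => if p.1 = q.1 then ∑ j, ((βt j p.1 : ℝ) : ℂ) * τC j p.2 q.2 else 0
    ρABC.PosSemidef ∧ ρABC.trace = 1 ∧ trC ρABC = σAB ∧ trA ρABC = τBC := by
  intro ρB βij ρABC σAB τBC
  have hρB : ∀ x, ρB x = ∑ i, β i x := fun _ => rfl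
  have hσtr' : ∀ i, ∑ a, σA i a a = 1 := by
    intro i; have := hσtr i; simpa [Matrix.trace, Matrix.diag] using this
  have hτtr' : ∀ j, ∑ c, τC j c c = 1 := by
    intro j; have := hτtr j; simpa [Matrix.trace, Matrix.diag] using this
  have hβij_nonneg : ∀ i j x, 0 ≤ βij i j x := by
    intro i j x
    simp only [βij]
    split
    · exact div_nonneg (mul_nonneg (hβ i x) (hβt j x)) (by
        rw [hρB x]; exact Finset.sum_nonneg fun i _ => hβ i x)
    · exact le_refl 0
  have hrow : ∀ i x, ∑ j, βij i j x = β i x := by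
    intro i x
    by_cases h : ρB x = 0
    · have hb0 : β i x = 0 := by
        have h' : ∑ i, β i x = 0 := by rw [← hρB x]; exact h
        exact (Finset.sum_eq_zero_iff_of_nonneg (fun i _ => hβ i x)).mp h' i
          (Finset.mem_univ i)
      simp [βij, h, hb0]
    · simp only [βij, if_pos h]
      rw [← Finset.sum_div, ← Finset.mul_sum, ← hcompat x]
      rw [show (∑ i, β i x) = ρB x from (hρB x).symm]
      rw [mul_div_assoc, div_self h, mul_one]
  have hcol : ∀ j x, ∑ i, βij i j x = βt j x := by
    intro j x
    by_cases h : ρB x = 0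
    · have hb0 : βt j x = 0 := by
        have h' : ∑ j, βt j x = 0 := by rw [← hcompat x, ← hρB x]; exact h
        exact (Finset.sum_eq_zero_iff_of_nonneg (fun j _ => hβt j x)).mp h' j
          (Finset.mem_univ j)
      simp [βij, h, hb0]
    · simp only [βij, if_pos h]
      rw [← Finset.sum_div, ← Finset.sum_mul]
      rw [show (∑ i, β i x) = ρB x from (hρB x).symm]
      rw [mul_comm, mul_div_assoc, div_self h, mul_one]
  -- positive semidefiniteness via an explicit decomposition
  have hdecomp : ρABC = ∑ x : Fin d, ∑ i : ιq, ∑ j : ιr,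
      ((βij i j x : ℝ) : ℂ) •
        (σA i ⊗ₖ ((Matrix.diagonal (fun y : Fin d => if y = x then (1 : ℂ) else 0)) ⊗ₖ τC j)) := by
    ext ⟨a, y, c⟩ ⟨a', y', c'⟩
    simp only [ρABC, Matrix.sum_apply, Matrix.smul_apply, kroneckerMap_apply,
      Matrix.diagonal_apply, smul_eq_mul]
    by_cases hyy : y = y'
    · subst hyy
      rw [if_pos rfl]
      rw [Finset.sum_eq_single y (fun x _ hx => by
        refine Finset.sum_eq_zero fun i _ => Finset.sum_eq_zero fun j _ => ?_
        rw [if_pos rfl, if_neg (fun h => hx h.symm)]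
        ring) (by simp)]
      refine Finset.sum_congr rfl fun i _ => Finset.sum_congr rfl fun j _ => ?_
      rw [if_pos rfl, if_pos rfl]
      ring
    · rw [if_neg hyy]
      refine (Finset.sum_eq_zero fun x _ => Finset.sum_eq_zero fun i _ =>
        Finset.sum_eq_zero fun j _ => ?_).symm
      rw [if_neg hyy]
      ring
  have hPSD : ρABC.PosSemidef := by
    rw [hdecomp]
    refine psd_sum _ _ fun x _ => psd_sum _ _ fun i _ => psd_sum _ _ fun j _ => ?_
    refine psd_smul (psd_kron (hσpsd i) (psd_kron ?_ (hτpsd j))) (hβij_nonneg i j x)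
    refine Matrix.PosSemidef.diagonal ?_
    intro y
    by_cases h : y = x <;> simp [h]
  -- AB marginal
  have htrC : trC ρABC = σAB := by
    ext ⟨a, x⟩ ⟨a', x'⟩
    simp only [trC, ρABC, σAB]
    by_cases hxx : x = x'
    · subst hxx
      rw [if_pos rfl]
      simp only [eq_self_iff_true, if_true]
      rw [Finset.sum_comm]
      refine Finset.sum_congr rfl fun i _ => ?_
      rw [Finset.sum_comm]
      calc ∑ j, ∑ c, ((βij i j x : ℝ) : ℂ) * σA i a a' * τC j c c
          = ∑ j, ((βij i j x : ℝ) : ℂ) * σA i a a' * ∑ c, τC j c c := by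
            simp [Finset.mul_sum]
        _ = ∑ j, ((βij i j x : ℝ) : ℂ) * σA i a a' := by
            refine Finset.sum_congr rfl fun j _ => ?_
            rw [hτtr' j, mul_one]
        _ = (∑ j, ((βij i j x : ℝ) : ℂ)) * σA i a a' := (Finset.sum_mul _ _ _).symm
        _ = ((β i x : ℝ) : ℂ) * σA i a a' := by
            rw [← Complex.ofReal_sum, hrow i x]
    · simp [hxx]
  -- BC marginal
  have htrA : trA ρABC = τBC := by
    ext ⟨x, c⟩ ⟨x', c'⟩
    simp only [trA, ρABC, τBC]
    by_cases hxx : x = x'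
    · subst hxx
      rw [if_pos rfl]
      simp only [eq_self_iff_true, if_true]
      calc ∑ a, ∑ i, ∑ j, ((βij i j x : ℝ) : ℂ) * σA i a a * τC j c c'
          = ∑ i, ∑ j, ∑ a, ((βij i j x : ℝ) : ℂ) * σA i a a * τC j c c' := by
            rw [Finset.sum_comm]
            exact Finset.sum_congr rfl fun i _ => Finset.sum_comm
        _ = ∑ i, ∑ j, ((βij i j x : ℝ) : ℂ) * τC j c c' := by
            refine Finset.sum_congr rfl fun i _ => Finset.sum_congr rfl fun j _ => ?_
            calc ∑ a, ((βij i j x : ℝ) : ℂ) * σA i a a * τC j c c'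
                = ((βij i j x : ℝ) : ℂ) * (∑ a, σA i a a) * τC j c c' := by
                  simp [Finset.sum_mul, Finset.mul_sum]
              _ = ((βij i j x : ℝ) : ℂ) * τC j c c' := by rw [hσtr' i, mul_one]
        _ = ∑ j, (∑ i, ((βij i j x : ℝ) : ℂ)) * τC j c c' := by
            rw [Finset.sum_comm]
            exact Finset.sum_congr rfl fun j _ => (Finset.sum_mul _ _ _).symm
        _ = ∑ j, ((βt j x : ℝ) : ℂ) * τC j c c' := by
            refine Finset.sum_congr rfl fun j _ => ?_
            rw [← Complex.ofReal_sum, hcol j x]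
    · simp [hxx]
  -- trace
  have htr : ρABC.trace = 1 := by
    have h1 : ρABC.trace = (trC ρABC).trace := by
      simp [Matrix.trace, Matrix.diag, trC, Fintype.sum_prod_type]
    rw [h1, htrC]
    simp only [Matrix.trace, Matrix.diag, σAB, Fintype.sum_prod_type, if_pos rfl]
    calc ∑ a, ∑ x, ∑ i, ((β i x : ℝ) : ℂ) * σA i a a
        = ∑ x, ∑ i, ∑ a, ((β i x : ℝ) : ℂ) * σA i a a := by
          rw [Finset.sum_comm]
          exact Finset.sum_congr rfl fun x _ => Finset.sum_comm
      _ = ∑ x, ∑ i, ((β i x : ℝ) : ℂ) := by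
          refine Finset.sum_congr rfl fun x _ => Finset.sum_congr rfl fun i _ => ?_
          rw [← Finset.mul_sum, hσtr' i, mul_one]
      _ = 1 := by
          rw [Finset.sum_comm]
          push_cast [← Complex.ofReal_sum]
          exact_mod_cast hβsum
  exact ⟨hPSD, htr, htrC, htrA⟩
end

section
/- The two-qubit Werner state W₂(v) = v·(2/6)P_s + (1−v)·(2/2)P_as on ℂ²⊗ℂ² has positive partial transpose if and only if v ≥ 1/2. More generally, for any d ≥ 2 the qudit Werner state W_d(v) has positive partial transpose if and only if v ≥ 1/2. -/
open Matrix ComplexOrder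

/-- The swap operator V on ℂᵈ⊗ℂᵈ. -/
def swapOp (d : ℕ) : Matrix (Fin d × Fin d) (Fin d × Fin d) ℂ :=
  fun a b => if a.1 = b.2 ∧ a.2 = b.1 then 1 else 0

/-- Projector onto the symmetric subspace, P_s = (I+V)/2. -/
noncomputable def Psym (d : ℕ) : Matrix (Fin d × Fin d) (Fin d × Fin d) ℂ :=
  ((1 : ℂ)/2) • ((1 : Matrix (Fin d × Fin d) (Fin d × Fin d) ℂ) + swapOp d)

/-- Projector onto the antisymmetric subspace, P_as = (I−V)/2. -/
noncomputable def Pasym (d : ℕ) : Matrix (Fin d × Fin d) (Fin d × Fin d) ℂ :=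
  ((1 : ℂ)/2) • ((1 : Matrix (Fin d × Fin d) (Fin d × Fin d) ℂ) - swapOp d)

/-- The qudit Werner state W_d(v) = v·(2/(d(d+1)))P_s + (1−v)·(2/(d(d−1)))P_as. -/
noncomputable def werner (d : ℕ) (v : ℝ) :
    Matrix (Fin d × Fin d) (Fin d × Fin d) ℂ :=
  ((v * (2 / (d * (d + 1))) : ℝ) : ℂ) • Psym d
    + (((1 - v) * (2 / (d * (d - 1))) : ℝ) : ℂ) • Pasym d

/-- Partial transpose on the second factor of ℂᵈ⊗ℂᵈ. -/
def ptranspose (d : ℕ) (M : Matrix (Fin d × Fin d) (Fin d × Fin d) ℂ) :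
    Matrix (Fin d × Fin d) (Fin d × Fin d) ℂ :=
  fun a b => M (a.1, b.2) (b.1, a.2)

/-- d times the projector onto the maximally entangled state. -/
def phiMat (d : ℕ) : Matrix (Fin d × Fin d) (Fin d × Fin d) ℂ :=
  fun a b => if a.1 = a.2 ∧ b.1 = b.2 then 1 else 0

lemma pt_werner (d : ℕ) (v : ℝ) :
    ptranspose d (werner d v) =
      (((v * (2 / (d * (d + 1))) + (1 - v) * (2 / (d * (d - 1)))) / 2 : ℝ) : ℂ)
        • (1 : Matrix (Fin d × Fin d) (Fin d × Fin d) ℂ)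
      + (((v * (2 / (d * (d + 1))) - (1 - v) * (2 / (d * (d - 1)))) / 2 : ℝ) : ℂ)
        • phiMat d := by
  ext ⟨a1, a2⟩ ⟨b1, b2⟩
  simp only [ptranspose, werner, Psym, Pasym, phiMat, swapOp, Matrix.add_apply,
    Matrix.smul_apply, Matrix.sub_apply, Matrix.one_apply, Prod.mk.injEq, Prod.ext_iff,
    smul_eq_mul]
  have h1 : (a1 = b1 ∧ b2 = a2) ↔ (a1 = b1 ∧ a2 = b2) := by
    constructor <;> rintro ⟨h, h'⟩ <;> exact ⟨h, h'.symm⟩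
  have h2 : (a1 = a2 ∧ b2 = b1) ↔ (a1 = a2 ∧ b1 = b2) := by
    constructor <;> rintro ⟨h, h'⟩ <;> exact ⟨h, h'.symm⟩
  simp only [h1, h2]
  push_cast
  split_ifs <;> ring

lemma phiMat_herm (d : ℕ) : (phiMat d)ᴴ = phiMat d := by
  ext a b
  simp [conjTranspose_apply, phiMat, apply_ite, and_comm]

lemma phiMat_mul (d : ℕ) : phiMat d * phiMat d = (d : ℂ) • phiMat d := by
  ext ⟨a1, a2⟩ ⟨b1, b2⟩
  simp only [mul_apply, phiMat, Matrix.smul_apply, smul_eq_mul]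
  by_cases ha : a1 = a2 <;> by_cases hb : b1 = b2 <;>
    simp [ha, hb, Fintype.sum_prod_type, Finset.sum_ite_eq, Finset.card_univ]

lemma posSemidef_of_proj {n : Type*} [Fintype n] [DecidableEq n]
    (P : Matrix n n ℂ) (h1 : Pᴴ = P) (h2 : P * P = P) : P.PosSemidef := by
  have h : P = Pᴴ * P := by rw [h1, h2]
  rw [h]
  exact posSemidef_conjTranspose_mul_self P

lemma posSemidef_smul {n : Type*} [Fintype n] [DecidableEq n]
    {M : Matrix n n ℂ} (hM : M.PosSemidef) {c : ℝ} (hc : 0 ≤ c) :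
    ((c : ℂ) • M).PosSemidef := by
  refine .of_dotProduct_mulVec_nonneg ?_ ?_
  · unfold Matrix.IsHermitian
    rw [conjTranspose_smul, hM.1]
    congr 1
    simp [Complex.star_def, Complex.conj_ofReal]
  · intro x
    rw [smul_mulVec, dotProduct_smul, smul_eq_mul]
    exact mul_nonneg (by exact_mod_cast Complex.zero_le_real.2 hc) (hM.dotProduct_mulVec_nonneg x)

/-- For every d ≥ 2 (in particular d = 2), the Werner state W_d(v) has positive
partial transpose iff v ≥ 1/2. -/
theorem stmt16 (d : ℕ) (hd : 2 ≤ d) (v : ℝ) (hv : v ∈ Set.Icc (0:ℝ) 1) :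
    (ptranspose d (werner d v)).PosSemidef ↔ (1/2 : ℝ) ≤ v := by
  obtain ⟨hv0, hv1⟩ := hv
  have hd2 : (2 : ℝ) ≤ (d : ℝ) := by exact_mod_cast hd
  have hd0 : (0 : ℝ) < d := by linarith
  have hdp : (0 : ℝ) < (d : ℝ) * ((d : ℝ) + 1) := by nlinarith
  have hdm : (0 : ℝ) < (d : ℝ) * ((d : ℝ) - 1) := by nlinarith
  set α : ℝ := (v * (2 / (d * (d + 1))) + (1 - v) * (2 / (d * (d - 1)))) / 2 with hα
  set β : ℝ := (v * (2 / (d * (d + 1))) - (1 - v) * (2 / (d * (d - 1)))) / 2 with hβ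
  have hkey : α * d + β * (d * d) = 2 * v - 1 := by
    rw [hα, hβ]
    have hd1 : (d:ℝ) - 1 ≠ 0 := by linarith
    field_simp
    ring
  rw [pt_werner]
  constructor
  · intro hPSD
    set x : Fin d × Fin d → ℂ := fun p => if p.1 = p.2 then 1 else 0 with hx
    have hs1 : star x ⬝ᵥ x = (d : ℂ) := by
      simp [dotProduct, hx, apply_ite, Fintype.sum_prod_type, Finset.sum_ite_eq,
        Finset.card_univ]
    have hs2 : phiMat d *ᵥ x = (d : ℂ) • x := by
      ext ⟨p1, p2⟩
      simp only [mulVec, dotProduct, phiMat, hx, Pi.smul_apply, smul_eq_mul]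
      by_cases hp : p1 = p2 <;>
        simp [hp, Fintype.sum_prod_type, Finset.sum_ite_eq, Finset.card_univ]
    have h := hPSD.dotProduct_mulVec_nonneg x
    rw [add_mulVec, smul_mulVec, smul_mulVec, one_mulVec, hs2,
      dotProduct_add, dotProduct_smul, dotProduct_smul, dotProduct_smul, hs1,
      smul_eq_mul, smul_eq_mul, smul_eq_mul] at h
    have h' : (0 : ℂ) ≤ ((α * d + β * (d * d) : ℝ) : ℂ) := by
      have hcast : ((α * d + β * (d * d) : ℝ) : ℂ)
          = ((α : ℝ) : ℂ) * (d : ℂ) + ((β : ℝ) : ℂ) * ((d : ℂ) * (d : ℂ)) := by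
        push_cast
        ring
      rw [hcast]
      exact h
    rw [hkey] at h'
    have := Complex.zero_le_real.1 h'
    linarith
  · intro hv2
    have hdc : ((d : ℕ) : ℂ) ≠ 0 := by
      simp only [ne_eq, Nat.cast_eq_zero]
      omega
    have hdecomp : (α : ℂ) • (1 : Matrix (Fin d × Fin d) (Fin d × Fin d) ℂ)
        + (β : ℂ) • phiMat d
        = (α : ℂ) • ((1 : Matrix (Fin d × Fin d) (Fin d × Fin d) ℂ)
            - ((d : ℂ))⁻¹ • phiMat d)
          + ((α + β * d : ℝ) : ℂ) • (((d : ℂ))⁻¹ • phiMat d) := by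
      rw [smul_sub, smul_smul, smul_smul]
      have : (((α + β * d : ℝ) : ℂ)) * ((d : ℂ))⁻¹ = (α : ℂ) * ((d : ℂ))⁻¹ + (β : ℂ) := by
        push_cast
        field_simp
      rw [this, add_smul]
      abel
    rw [hdecomp]
    have hPh : (((d : ℂ))⁻¹ • phiMat d)ᴴ = ((d : ℂ))⁻¹ • phiMat d := by
      rw [conjTranspose_smul, phiMat_herm]
      congr 1
      simp
    have hPP : (((d : ℂ))⁻¹ • phiMat d) * (((d : ℂ))⁻¹ • phiMat d)
        = ((d : ℂ))⁻¹ • phiMat d := by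
      rw [smul_mul_assoc, Matrix.mul_smul, phiMat_mul, smul_smul, smul_smul]
      congr 1
      field_simp
    have hPproj : (((d : ℂ))⁻¹ • phiMat d).PosSemidef :=
      posSemidef_of_proj _ hPh hPP
    have hQproj : ((1 : Matrix (Fin d × Fin d) (Fin d × Fin d) ℂ)
        - ((d : ℂ))⁻¹ • phiMat d).PosSemidef := by
      apply posSemidef_of_proj
      · rw [conjTranspose_sub, conjTranspose_one, hPh]
      · rw [sub_mul, one_mul, mul_sub, mul_one, hPP]
        abel
    have hαnn : 0 ≤ α := by
      rw [hα]
      have h1 : 0 ≤ v * (2 / (d * (d + 1))) :=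
        mul_nonneg hv0 (div_nonneg (by norm_num) hdp.le)
      have h2 : 0 ≤ (1 - v) * (2 / (d * (d - 1))) :=
        mul_nonneg (by linarith) (div_nonneg (by norm_num) hdm.le)
      linarith
    have hγnn : 0 ≤ α + β * d := by
      have : (α + β * d) * d = 2 * v - 1 := by nlinarith [hkey]
      nlinarith
    exact (posSemidef_smul hQproj hαnn).add (posSemidef_smul hPproj hγnn)
end
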